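/- arXiv:1908.03172 — 2 statements merged into one kernel-verified Lean document; each statement's English description precedes it below -/
import Mathlib

section
/- Let G be a minimally non-(3,4)-colorable graph with girth at least 5, and let C = u_1 u_2 u_3 u_4 u_5 u_6 be a 6-cycle in G such that none of the vertices u_1, ..., u_6 has degree 2. Then no vertex of C has exactly one 3^+-neighbor, and at most four of the vertices u_1, ..., u_6 are 5s-vertices. -/
/-- The degree of a vertex: the number of its neighbors. -/
noncomputable def degN {V : Type*} (G : SimpleGraph V) (v : V) : ℕ :=
  {w | G.Adj v w}.ncard

/-- `c` is a (3,4)-coloring of `G`: every vertex gets value 3 or 4, and every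
vertex with value `i` has at most `i` neighbors with value `i`. -/
def IsColoring34 {V : Type*} (G : SimpleGraph V) (c : V → ℕ) : Prop :=
  (∀ v, c v = 3 ∨ c v = 4) ∧ ∀ v, {w | G.Adj v w ∧ c w = c v}.ncard ≤ c v

/-- `G` is (3,4)-colorable. -/
def Colorable34 {V : Type*} (G : SimpleGraph V) : Prop :=
  ∃ c, IsColoring34 G c

/-- The graph `G − v` obtained by deleting the vertex `v` and its incident edges
(keeping `v` as an isolated vertex, which does not affect (3,4)-colorability). -/
def deleteVert {V : Type*} (G : SimpleGraph V) (v : V) : SimpleGraph V where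
  Adj a b := G.Adj a b ∧ a ≠ v ∧ b ≠ v
  symm := ⟨fun _ _ ⟨h, ha, hb⟩ => ⟨h.symm, hb, ha⟩⟩
  loopless := ⟨fun a ⟨h, _, _⟩ => G.loopless.irrefl a h⟩

/-- `G` is minimally non-(3,4)-colorable. -/
def MinNonColorable34 {V : Type*} (G : SimpleGraph V) : Prop :=
  ¬ Colorable34 G ∧ (∀ v, Colorable34 (deleteVert G v)) ∧
    ∀ e ∈ G.edgeSet, Colorable34 (G.deleteEdges {e})

/-- `u` is `i`-saturated under the coloring `c` of the graph `G`. -/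
def Saturated34 {V : Type*} (G : SimpleGraph V) (c : V → ℕ) (i : ℕ) (u : V) : Prop :=
  c u = i ∧ {w | G.Adj u w ∧ c w = i}.ncard = i

/-- `u` can be recolored: changing the color of `u` to the other color
(`7 - c u` swaps 3 and 4) again yields a (3,4)-coloring of `G`. -/
def Recolorable34 {V : Type*} [DecidableEq V] (G : SimpleGraph V) (c : V → ℕ) (u : V) : Prop :=
  IsColoring34 G (Function.update c u (7 - c u))

/-- The number of 3^+-neighbors of `x` in `G` (neighbors of degree at least 3). -/
noncomputable def tpn {V : Type*} (G : SimpleGraph V) (x : V) : ℕ :=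
  {w | G.Adj x w ∧ 3 ≤ degN G w}.ncard

/-- A 5p-vertex (poor 5-vertex): degree 5 with exactly one 3^+-neighbor. -/
def Is5p {V : Type*} (G : SimpleGraph V) (x : V) : Prop := degN G x = 5 ∧ tpn G x = 1

/-- A 5s-vertex (semi-poor 5-vertex): degree 5 with exactly two 3^+-neighbors. -/
def Is5s {V : Type*} (G : SimpleGraph V) (x : V) : Prop := degN G x = 5 ∧ tpn G x = 2

/-- A 6p-vertex (poor 6-vertex): degree 6 with exactly one 3^+-neighbor. -/
def Is6p {V : Type*} (G : SimpleGraph V) (x : V) : Prop := degN G x = 6 ∧ tpn G x = 1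

/-- `G` has girth at least 5: no 3-cycles and no 4-cycles. -/
def GirthAtLeast5 {V : Type*} (G : SimpleGraph V) : Prop :=
  (∀ a b c : V, G.Adj a b → G.Adj b c → ¬ G.Adj c a) ∧
  (∀ a b c d : V, a ≠ c → b ≠ d →
    G.Adj a b → G.Adj b c → G.Adj c d → ¬ G.Adj d a)

/-!
Every vertex of a minimally non-(3,4)-colorable graph has degree at least 2, since a vertex with at
most one neighbor can always be given a color that none of its neighbors has. So every vertex of the
cycle has its two cycle-neighbors as 3^+-neighbors.

For the second claim, let `q` be a 5s-vertex whose two 3^+-neighbors `p` and `r` have degree 5,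
and take a coloring `c` of `G - pq`. Since `G` is not colorable, `c p = c q` and one of `p`, `q`
is saturated in `G - pq`. If the common color is 4, the saturated endpoint sees only color 4 and can
be recolored 3. If it is 3, recolor `q` to 4: its other neighbors have degree at most 2, except `r`,
which, when saturated with color 4, first moves to color 3 itself. In either case `G` becomes
colorable, so no three consecutive vertices of the 6-cycle are 5s-vertices.
-/

open Function

section Coloring

variable {V : Type*} {G H : SimpleGraph V} {c : V → ℕ}

theorem ncard_adj_and_le_degN [Finite V] (hle : H ≤ G) (v : V) (P : V → Prop) :
    {w | H.Adj v w ∧ P w}.ncard ≤ degN G v :=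
  Set.ncard_le_ncard fun _ hw => hle hw.1

theorem degN_mono [Finite V] (hle : H ≤ G) (v : V) : degN H v ≤ degN G v :=
  Set.ncard_le_ncard fun _ hw => hle hw

theorem ncard_deleteEdges_adj_add_one [Finite V] {a b : V} (hab : G.Adj a b) :
    {w | (G.deleteEdges {s(a, b)}).Adj a w}.ncard + 1 = degN G a := by
  have : {w | (G.deleteEdges {s(a, b)}).Adj a w} = {w | G.Adj a w} \ {b} := by
    ext w
    grind [SimpleGraph.deleteEdges_adj, Sym2.eq_iff, hab.ne]
  rw [this]
  exact Set.ncard_sdiff_singleton_add_one hab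

theorem IsColoring34.mono_left [Finite V] (hle : H ≤ G) (hc : IsColoring34 G c) :
    IsColoring34 H c :=
  ⟨hc.1, fun v => (Set.ncard_le_ncard (t := {w | G.Adj v w ∧ c w = c v})
    fun _ hw => ⟨hle hw.1, hw.2⟩).trans (hc.2 v)⟩

theorem IsColoring34.update [DecidableEq V] [Finite V] {u : V} {i : ℕ} (hc : IsColoring34 G c)
    (hi : i = 3 ∨ i = 4) (hu : {w | G.Adj u w ∧ c w = i}.ncard ≤ i)
    (hnbr : ∀ w, G.Adj u w → c w = i → {x | G.Adj w x ∧ c x = i}.ncard < i) :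
    IsColoring34 G (Function.update c u i) := by
  refine ⟨fun v => ?_, fun v => ?_⟩
  · rw [update_apply]
    split_ifs
    exacts [hi, hc.1 v]
  rcases eq_or_ne v u with rfl | hv
  · rw [update_self]
    refine le_of_eq_of_le ?_ hu
    congr 1
    ext w
    exact and_congr_right fun hw => by rw [update_of_ne hw.ne']
  rw [update_of_ne hv]
  by_cases hvu : G.Adj v u ∧ c v = i
  · have := hnbr v hvu.1.symm hvu.2
    calc _ ≤ (insert u {x | G.Adj v x ∧ c x = c v}).ncard := by
          refine Set.ncard_le_ncard fun w ⟨hw, hcw⟩ => ?_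
          rcases eq_or_ne w u with rfl | hwu
          · exact Set.mem_insert _ _
          · exact Set.mem_insert_of_mem _ ⟨hw, by rwa [update_of_ne hwu] at hcw⟩
      _ ≤ {x | G.Adj v x ∧ c x = c v}.ncard + 1 := Set.ncard_insert_le _ _
      _ ≤ c v := by rw [hvu.2]; omega
  · refine le_trans (Set.ncard_le_ncard fun w ⟨hw, hcw⟩ => ?_) (hc.2 v)
    rcases eq_or_ne w u with rfl | hwu
    · simp only [update_self] at hcw
      exact absurd ⟨hw, hcw.symm⟩ hvu
    · exact ⟨hw, by rwa [update_of_ne hwu] at hcw⟩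

theorem IsColoring34.update_of_forall_adj_ne [DecidableEq V] [Finite V] {u : V} {i : ℕ}
    (hc : IsColoring34 G c) (hi : i = 3 ∨ i = 4) (h : ∀ w, G.Adj u w → c w ≠ i) :
    IsColoring34 G (Function.update c u i) := by
  refine hc.update hi ?_ fun w hw hcw => absurd hcw (h w hw)
  have : {w | G.Adj u w ∧ c w = i} = ∅ := Set.eq_empty_of_forall_notMem fun w hw => h w hw.1 hw.2
  rw [this, Set.ncard_empty]
  exact Nat.zero_le i

theorem ncard_sameColor_le_of_deleteEdges [Finite V] {a b : V}
    (hc : IsColoring34 (G.deleteEdges {s(a, b)}) c)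
    (h : c a = c b → {w | (G.deleteEdges {s(a, b)}).Adj a w ∧ c w = c a}.ncard < c a) :
    {w | G.Adj a w ∧ c w = c a}.ncard ≤ c a := by
  have hsub : {w | G.Adj a w ∧ c w = c a} ⊆
      insert b {w | (G.deleteEdges {s(a, b)}).Adj a w ∧ c w = c a} := by
    rintro w ⟨hw, hcw⟩
    rcases eq_or_ne w b with rfl | hwb
    · exact Set.mem_insert _ _
    · exact Set.mem_insert_of_mem _ ⟨by grind [SimpleGraph.deleteEdges_adj, Sym2.eq_iff], hcw⟩
  by_cases hab : c a = c b
  · calc _ ≤ _ := Set.ncard_le_ncard hsub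
      _ ≤ _ := Set.ncard_insert_le _ _
      _ ≤ c a := h hab
  · have hb : b ∉ {w | G.Adj a w ∧ c w = c a} := fun hb => hab hb.2.symm
    exact (Set.ncard_le_ncard ((Set.subset_insert_iff_of_notMem hb).mp hsub)).trans (hc.2 a)

theorem IsColoring34.of_deleteEdges [Finite V] {a b : V}
    (hc : IsColoring34 (G.deleteEdges {s(a, b)}) c)
    (h : c a = c b → {w | (G.deleteEdges {s(a, b)}).Adj a w ∧ c w = c a}.ncard < c a ∧
      {w | (G.deleteEdges {s(a, b)}).Adj b w ∧ c w = c b}.ncard < c b) :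
    IsColoring34 G c := by
  refine ⟨hc.1, fun v => ?_⟩
  rcases eq_or_ne v a with rfl | hva
  · exact ncard_sameColor_le_of_deleteEdges hc fun hab => (h hab).1
  rcases eq_or_ne v b with rfl | hvb
  · rw [Sym2.eq_swap] at hc h
    exact ncard_sameColor_le_of_deleteEdges hc fun hab => (h hab.symm).2
  refine le_of_eq_of_le ?_ (hc.2 v)
  congr 1
  ext w
  grind [SimpleGraph.deleteEdges_adj, Sym2.eq_iff]

theorem IsColoring34.of_deleteEdges_of_ne [Finite V] {a b : V}
    (hc : IsColoring34 (G.deleteEdges {s(a, b)}) c) (hab : c a ≠ c b) : IsColoring34 G c :=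
  hc.of_deleteEdges fun h => absurd h hab

theorem IsColoring34.eq_and_saturated_of_deleteEdges [Finite V] {a b : V}
    (hc : IsColoring34 (G.deleteEdges {s(a, b)}) c) (hG : ¬ Colorable34 G) :
    c a = c b ∧ ({w | (G.deleteEdges {s(a, b)}).Adj a w ∧ c w = c a}.ncard = c a ∨
      {w | (G.deleteEdges {s(a, b)}).Adj b w ∧ c w = c b}.ncard = c b) := by
  by_contra h
  refine hG ⟨c, hc.of_deleteEdges fun hab => ?_⟩
  have := hc.2 a
  have := hc.2 b
  omega

theorem forall_adj_color_eq_of_ncard_le [Finite V] {v : V} {i : ℕ}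
    (h : {w | G.Adj v w}.ncard ≤ {w | G.Adj v w ∧ c w = i}.ncard) :
    ∀ w, G.Adj v w → c w = i :=
  fun _ hw => ((Set.eq_of_subset_of_ncard_le (fun _ hw => hw.1) h).ge hw).2

end Coloring

section Degrees

variable {V : Type*} [Finite V] {G : SimpleGraph V}

theorem two_le_degN_of_colorable_deleteVert (hG : ¬ Colorable34 G) {v : V}
    (hv : Colorable34 (deleteVert G v)) : 2 ≤ degN G v := by
  classical
  by_contra! hlt
  obtain ⟨c, hc⟩ := hv
  obtain ⟨i, hi, hvi⟩ : ∃ i, (i = 3 ∨ i = 4) ∧ ∀ w, G.Adj v w → c w ≠ i := by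
    by_contra! h
    obtain ⟨w₃, hw₃, hc₃⟩ := h 3 (.inl rfl)
    obtain ⟨w₄, hw₄, hc₄⟩ := h 4 (.inr rfl)
    have : 1 < degN G v := (Set.one_lt_ncard_iff).mpr ⟨w₃, w₄, hw₃, hw₄, by rintro rfl; omega⟩
    omega
  refine hG ⟨Function.update c v i, fun x => ?_, fun x => ?_⟩
  · rw [update_apply]
    split_ifs
    exacts [hi, hc.1 x]
  rcases eq_or_ne x v with rfl | hx
  · have : {w | G.Adj x w ∧ update c x i w = update c x i x} = ∅ :=
      Set.eq_empty_of_forall_notMem fun w ⟨hw, hcw⟩ =>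
        hvi w hw (by rwa [update_of_ne hw.ne', update_self] at hcw)
    rw [this, Set.ncard_empty]
    exact Nat.zero_le _
  rw [update_of_ne hx]
  refine le_trans (Set.ncard_le_ncard fun w ⟨hw, hcw⟩ => ?_) (hc.2 x)
  rcases eq_or_ne w v with rfl | hwv
  · rw [update_self] at hcw
    exact absurd hcw.symm (hvi x hw.symm)
  · exact ⟨⟨hw, hx, hwv⟩, by rwa [update_of_ne hwv] at hcw⟩

theorem two_le_tpn {x a b : V} (hab : a ≠ b) (ha : G.Adj x a) (hb : G.Adj x b)
    (hda : 3 ≤ degN G a) (hdb : 3 ≤ degN G b) : 2 ≤ tpn G x :=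
  (Set.one_lt_ncard_iff).mpr ⟨a, b, ⟨ha, hda⟩, ⟨hb, hdb⟩, hab⟩

theorem degN_le_two_of_tpn_le_two {x a b w : V} (htpn : tpn G x ≤ 2) (hab : a ≠ b)
    (ha : G.Adj x a) (hb : G.Adj x b) (hda : 3 ≤ degN G a) (hdb : 3 ≤ degN G b)
    (hw : G.Adj x w) (hwa : w ≠ a) (hwb : w ≠ b) : degN G w ≤ 2 := by
  by_contra! hdw
  have : 2 < tpn G x :=
    (Set.two_lt_ncard_iff).mpr ⟨a, b, w, ⟨ha, hda⟩, ⟨hb, hdb⟩, ⟨hw, hdw⟩, hab, hwa.symm, hwb.symm⟩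
  omega

end Degrees

section Recoloring

variable {V : Type*} [Finite V] {G : SimpleGraph V} {c : V → ℕ}

theorem colorable34_of_saturated_four {a b : V} (hab : G.Adj a b) (ha : degN G a ≤ 5)
    (hc : IsColoring34 (G.deleteEdges {s(a, b)}) c) (hcb : c b = 4)
    (hsat : {w | (G.deleteEdges {s(a, b)}).Adj a w ∧ c w = 4}.ncard = 4) : Colorable34 G := by
  classical
  have hall := forall_adj_color_eq_of_ncard_le (G := G.deleteEdges {s(a, b)}) (v := a) (c := c)
    (i := 4) (by have := ncard_deleteEdges_adj_add_one hab; omega)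
  refine ⟨Function.update c a 3, (hc.update_of_forall_adj_ne (.inl rfl) fun w hw => ?_)
    |>.of_deleteEdges_of_ne ?_⟩
  · simp [hall w hw]
  · simp [hab.ne', hcb]

theorem colorable34_of_both_three {p q r : V} (hpq : G.Adj p q) (hqr : G.Adj q r)
    (hpr : p ≠ r) (hq : degN G q ≤ 5) (hr : degN G r ≤ 5)
    (hlow : ∀ w, G.Adj q w → w ≠ p → w ≠ r → degN G w ≤ 2)
    (hc : IsColoring34 (G.deleteEdges {s(p, q)}) c) (hcp : c p = 3) (hcq : c q = 3) :
    Colorable34 G := by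
  classical
  set H := G.deleteEdges {s(p, q)} with hH
  have hHG : H ≤ G := G.deleteEdges_le _
  have hHq : {w | H.Adj q w}.ncard ≤ 4 := by
    have : {w | H.Adj q w}.ncard + 1 = degN G q := by
      rw [hH, Sym2.eq_swap]
      exact ncard_deleteEdges_adj_add_one hpq.symm
    omega
  have recolor_q : ∀ K ≤ H, ∀ c' : V → ℕ, IsColoring34 K c' →
      (K.Adj q r → c' r = 4 → {x | K.Adj r x ∧ c' x = 4}.ncard < 4) →
      IsColoring34 K (Function.update c' q 4) := by
    intro K hK c' hc' hr'
    refine hc'.update (.inr rfl) ((Set.ncard_le_ncard fun w hw => hK hw.1).trans hHq)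
      fun w hw hcw => ?_
    rcases eq_or_ne w r with rfl | hwr
    · exact hr' hw hcw
    have hwp : w ≠ p := by
      rintro rfl
      simpa [hH] using hK hw
    have := hlow w (hHG (hK hw)) hwp hwr
    have := ncard_adj_and_le_degN (hK.trans hHG) w (fun x => c' x = 4)
    omega
  suffices ∃ c', IsColoring34 H c' ∧ c' p = 3 ∧ c' q = 4 by
    obtain ⟨c', hc', hp, hq⟩ := this
    exact ⟨c', hc'.of_deleteEdges_of_ne (by omega)⟩
  by_cases hrsat : c r = 4 ∧ {x | H.Adj r x ∧ c x = 4}.ncard = 4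
  · set K := H.deleteEdges {s(r, q)} with hK
    have hKH : K ≤ H := H.deleteEdges_le _
    have hall : ∀ w, K.Adj r w → c w = 4 := by
      refine forall_adj_color_eq_of_ncard_le ?_
      have hHrq : H.Adj r q := by simp [hH, hqr.symm, hpr.symm, hqr.ne']
      have : {w | K.Adj r w}.ncard + 1 = degN H r := ncard_deleteEdges_adj_add_one hHrq
      have := degN_mono hHG r
      have : {x | H.Adj r x ∧ c x = 4}.ncard ≤ {x | K.Adj r x ∧ c x = 4}.ncard :=
        Set.ncard_le_ncard fun x ⟨hx, hcx⟩ =>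
          ⟨by grind [SimpleGraph.deleteEdges_adj, Sym2.eq_iff], hcx⟩
      omega
    have hc₁ : IsColoring34 K (Function.update c r 3) :=
      (hc.mono_left hKH).update_of_forall_adj_ne (.inl rfl) fun w hw => by simp [hall w hw]
    have hc₂ := recolor_q K hKH _ hc₁ fun h => absurd h (by simp [hK])
    refine ⟨_, hc₂.of_deleteEdges_of_ne ?_, ?_, ?_⟩ <;> simp [hpq.ne, hpr, hqr.ne', hcp]
  · refine ⟨Function.update c q 4, recolor_q H le_rfl c hc fun _ hcr => ?_, by simp [hpq.ne, hcp],
      by simp⟩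
    have := hc.2 r
    rw [hcr] at this
    exact this.lt_of_ne fun h => hrsat ⟨hcr, h⟩

theorem not_is5s_of_adj_degN_eq_five (hG : ¬ Colorable34 G) {p q r : V} (hpq : G.Adj p q)
    (hqr : G.Adj q r) (hpr : p ≠ r) (hcrit : Colorable34 (G.deleteEdges {s(p, q)}))
    (hp : degN G p = 5) (hr : degN G r = 5) : ¬ Is5s G q := by
  rintro ⟨hq, htpn⟩
  obtain ⟨c, hc⟩ := hcrit
  obtain ⟨hcpq, hsat⟩ := hc.eq_and_saturated_of_deleteEdges hG
  rcases hc.1 q with hcq | hcq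
  · refine hG (colorable34_of_both_three hpq hqr hpr hq.le hr.le (fun w hw hwp hwr => ?_) hc
      (hcpq.trans hcq) hcq)
    exact degN_le_two_of_tpn_le_two htpn.le hpr hpq.symm hqr (by omega) (by omega) hw hwp hwr
  rcases hsat with hsat | hsat
  · exact hG (colorable34_of_saturated_four hpq hp.le hc hcq (by rwa [hcpq, hcq] at hsat))
  · rw [Sym2.eq_swap] at hc hsat
    exact hG (colorable34_of_saturated_four hpq.symm hq.le hc (hcpq.trans hcq)
      (by rwa [hcq] at hsat))

end Recoloring

theorem ncard_sep_triple_le_two {α : Type*} {a b c : α} {P : α → Prop}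
    (h : ¬ (P a ∧ P b ∧ P c)) : {x ∈ ({a, b, c} : Set α) | P x}.ncard ≤ 2 := by
  have key : ∀ y z : α, {x ∈ ({a, b, c} : Set α) | P x} ⊆ {y, z} →
      {x ∈ ({a, b, c} : Set α) | P x}.ncard ≤ 2 := fun y z hs =>
    (Set.ncard_le_ncard hs).trans ((Set.ncard_insert_le _ _).trans (by simp))
  by_cases ha : P a
  · by_cases hb : P b
    · exact key a b fun x ⟨hx, hPx⟩ => by grind
    · exact key a c fun x ⟨hx, hPx⟩ => by grind
  · exact key b c fun x ⟨hx, hPx⟩ => by grind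

theorem ncard_sep_six_le_four {α : Type*} {a b c d e f : α} {P : α → Prop}
    (habc : ¬ (P a ∧ P b ∧ P c)) (hdef : ¬ (P d ∧ P e ∧ P f)) :
    {x ∈ ({a, b, c, d, e, f} : Set α) | P x}.ncard ≤ 4 := by
  have : {x ∈ ({a, b, c, d, e, f} : Set α) | P x} =
      {x ∈ ({a, b, c} : Set α) | P x} ∪ {x ∈ ({d, e, f} : Set α) | P x} := by
    ext x
    simp only [Set.mem_ofPred_eq, Set.mem_union, Set.mem_insert_iff, Set.mem_singleton_iff]
    tauto
  rw [this]
  exact (Set.ncard_union_le _ _).trans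
    (add_le_add (ncard_sep_triple_le_two habc) (ncard_sep_triple_le_two hdef))

theorem stmt_16_general {V : Type*} [Fintype V] (G : SimpleGraph V)
    (hG : MinNonColorable34 G)
    (u1 u2 u3 u4 u5 u6 : V)
    (hnd : ([u1, u2, u3, u4, u5, u6] : List V).Nodup)
    (a12 : G.Adj u1 u2) (a23 : G.Adj u2 u3) (a34 : G.Adj u3 u4)
    (a45 : G.Adj u4 u5) (a56 : G.Adj u5 u6) (a61 : G.Adj u6 u1)
    (h2 : ∀ x ∈ ({u1, u2, u3, u4, u5, u6} : Set V), degN G x ≠ 2) :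
    (∀ x ∈ ({u1, u2, u3, u4, u5, u6} : Set V), tpn G x ≠ 1) ∧
      {x ∈ ({u1, u2, u3, u4, u5, u6} : Set V) | Is5s G x}.ncard ≤ 4 := by
  simp only [List.nodup_cons, List.mem_cons, List.not_mem_nil, or_false, List.nodup_nil,
    and_true, not_or] at hnd
  obtain ⟨⟨-, h13, -, h15, h16⟩, ⟨-, h24, -, h26⟩, ⟨-, h35, -⟩, ⟨-, h46⟩, -⟩ := hnd
  have no_three : ∀ {p q r}, G.Adj p q → G.Adj q r → p ≠ r →
      ¬ (Is5s G p ∧ Is5s G q ∧ Is5s G r) := fun hpq hqr hpr ⟨hp, hq, hr⟩ =>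
    not_is5s_of_adj_degN_eq_five hG.1 hpq hqr hpr (hG.2.2 _ hpq) hp.1 hr.1 hq
  refine ⟨?_, ncard_sep_six_le_four (no_three a12 a23 h13) (no_three a45 a56 h46)⟩
  have hdeg : ∀ x ∈ ({u1, u2, u3, u4, u5, u6} : Set V), 3 ≤ degN G x := fun x hx => by
    have := two_le_degN_of_colorable_deleteVert hG.1 (hG.2.1 x)
    have := h2 x hx
    omega
  simp only [Set.mem_insert_iff, Set.mem_singleton_iff, forall_eq_or_imp, forall_eq] at hdeg ⊢
  obtain ⟨d1, d2, d3, d4, d5, d6⟩ := hdeg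
  refine ⟨?_, ?_, ?_, ?_, ?_, ?_⟩ <;> apply Nat.ne_of_gt
  exacts [two_le_tpn h26 a12 a61.symm d2 d6, two_le_tpn h13 a12.symm a23 d1 d3,
    two_le_tpn h24 a23.symm a34 d2 d4, two_le_tpn h35 a34.symm a45 d3 d5,
    two_le_tpn h46 a45.symm a56 d4 d6, two_le_tpn (Ne.symm h15) a56.symm a61 d5 d1]

/-- In a minimally non-(3,4)-colorable graph of girth at least 5, if
no vertex of a 6-cycle has degree 2, then no vertex of the cycle has exactly one
3^+-neighbor, and at most four of its vertices are 5s-vertices. -/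
theorem stmt_16 {V : Type*} [Fintype V] (G : SimpleGraph V)
    (hG : MinNonColorable34 G) (hgirth : GirthAtLeast5 G)
    (u1 u2 u3 u4 u5 u6 : V)
    (hnd : ([u1, u2, u3, u4, u5, u6] : List V).Nodup)
    (a12 : G.Adj u1 u2) (a23 : G.Adj u2 u3) (a34 : G.Adj u3 u4)
    (a45 : G.Adj u4 u5) (a56 : G.Adj u5 u6) (a61 : G.Adj u6 u1)
    (h2 : ∀ x ∈ ({u1, u2, u3, u4, u5, u6} : Set V), degN G x ≠ 2) :
    (∀ x ∈ ({u1, u2, u3, u4, u5, u6} : Set V), tpn G x ≠ 1) ∧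
      {x ∈ ({u1, u2, u3, u4, u5, u6} : Set V) | Is5s G x}.ncard ≤ 4 :=
  stmt_16_general G hG u1 u2 u3 u4 u5 u6 hnd a12 a23 a34 a45 a56 a61 h2
end

section
/- Let G be a minimally non-(3,4)-colorable graph with girth at least 5, and let C = u_1 u_2 u_3 u_4 u_5 be a 5-cycle in G such that u_1 has degree 2 and u_2, u_3, u_4, u_5 all have degree at least 3. Then either at most two of the vertices u_2, u_3, u_4, u_5 are 5p-, 5s-, or 6p-vertices, or some vertex of C is either a vertex of degree at least 7 with at least three 3^+-neighbors or a vertex of degree at least 9. -/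
section Development

variable {V : Type*}

def colorNbhd (H : SimpleGraph V) (c : V → ℕ) (i : ℕ) (v : V) : Set V :=
  {w | H.Adj v w ∧ c w = i}

def bigNbrs (H : SimpleGraph V) (v : V) : Set V :=
  {w | H.Adj v w ∧ 3 ≤ degN H w}

noncomputable def swap34 (S : Set V) (c : V → ℕ) (v : V) : ℕ :=
  open Classical in if v ∈ S then 7 - c v else c v

section Coloring

variable {H : SimpleGraph V} {c : V → ℕ} {S : Set V} {i j : ℕ} {a b v w : V}

theorem swap34_of_mem (h : v ∈ S) : swap34 S c v = 7 - c v := by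
  simp [swap34, h]

theorem swap34_of_notMem (h : v ∉ S) : swap34 S c v = c v := by
  simp [swap34, h]

theorem IsColoring34.ncard_colorNbhd_lt (hc : IsColoring34 H c) (hv : c v = i)
    (hs : ¬ Saturated34 H c i v) : (colorNbhd H c i v).ncard < i := by
  subst hv
  exact lt_of_le_of_ne (hc.2 v) fun h => hs ⟨rfl, h⟩

theorem colorNbhd_swap34_subset (hc : IsColoring34 H c)
    (halt : ∀ w ∈ S, H.Adj v w → c w ≠ c v) :
    colorNbhd H (swap34 S c) (7 - c v) v ⊆ colorNbhd H c (7 - c v) v \ S := by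
  rintro w ⟨hvw, hcw⟩
  by_cases hwS : w ∈ S
  · rw [swap34_of_mem hwS] at hcw
    have := hc.1 v
    have := hc.1 w
    exact absurd (by omega) (halt w hwS hvw)
  · exact ⟨⟨hvw, by rwa [swap34_of_notMem hwS] at hcw⟩, hwS⟩

variable [Finite V]

theorem ncard_colorNbhd_le_degN (H : SimpleGraph V) (c : V → ℕ) (i : ℕ) (v : V) :
    (colorNbhd H c i v).ncard ≤ degN H v :=
  Set.ncard_le_ncard fun _ hw => hw.1

theorem ncard_colorNbhd_add_ncard_colorNbhd_le (hij : i ≠ j) :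
    (colorNbhd H c i v).ncard + (colorNbhd H c j v).ncard ≤ degN H v := by
  rw [← Set.ncard_union_eq (Set.disjoint_left.2 fun w hi hj => hij (hi.2.symm.trans hj.2))]
  exact Set.ncard_le_ncard (Set.union_subset (fun _ hw => hw.1) fun _ hw => hw.1)

theorem Saturated34.ncard_colorNbhd_add_le (hs : Saturated34 H c i v) (hji : j ≠ i) :
    (colorNbhd H c j v).ncard + i ≤ degN H v := by
  have : (colorNbhd H c i v).ncard = i := hs.2
  have := ncard_colorNbhd_add_ncard_colorNbhd_le (H := H) (c := c) (v := v) hji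
  omega

theorem Saturated34.ncard_colorNbhd_sdiff_le (hs : Saturated34 H c (c v) v)
    (hc : IsColoring34 H c) (hd : degN H v ≤ 5) :
    (colorNbhd H c (7 - c v) v \ S).ncard ≤ 7 - c v := by
  have := hc.1 v
  have := hs.ncard_colorNbhd_add_le (j := 7 - c v) (by omega)
  exact (Set.ncard_le_ncard Set.sdiff_subset).trans (by omega)

theorem ncard_colorNbhd_sdiff_add_two_le (ha : H.Adj v a) (hb : H.Adj v b) (hab : a ≠ b)
    (ha' : a ∈ S ∨ c a ≠ i) (hb' : b ∈ S ∨ c b ≠ i) :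
    (colorNbhd H c i v \ S).ncard + 2 ≤ degN H v := by
  have hpair : ({a, b} : Set V) ⊆ {w | H.Adj v w} := by
    rintro w (rfl | rfl) <;> assumption
  have hsub : colorNbhd H c i v \ S ⊆ {w | H.Adj v w} \ {a, b} := by
    rintro w ⟨⟨hw, hcw⟩, hwS⟩
    refine ⟨hw, ?_⟩
    rintro (rfl | rfl)
    · exact ha'.elim hwS (· hcw)
    · exact hb'.elim hwS (· hcw)
  have h1 := Set.ncard_le_ncard hsub
  have h2 := Set.ncard_le_ncard hpair
  rw [Set.ncard_sdiff hpair, Set.ncard_pair hab] at h1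
  rw [Set.ncard_pair hab] at h2
  unfold degN
  omega

theorem color_eq_of_degN_le (h : degN H v ≤ (colorNbhd H c i v).ncard) (hw : H.Adj v w) :
    c w = i := by
  have heq : colorNbhd H c i v = {w | H.Adj v w} :=
    Set.eq_of_subset_of_ncard_le (fun _ hw => hw.1) h
  have hw' : w ∈ {w | H.Adj v w} := hw
  rw [← heq] at hw'
  exact hw'.2

theorem color_eq_of_degN_le_add_one (h : degN H v ≤ (colorNbhd H c i v).ncard + 1)
    (ha : H.Adj v a) (hca : c a ≠ i) (hw : H.Adj v w) (hwa : w ≠ a) : c w = i := by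
  have hsub : colorNbhd H c i v ⊆ {w | H.Adj v w} \ {a} :=
    fun u hu => ⟨hu.1, fun (hua : u = a) => hca (hua ▸ hu.2)⟩
  have hcard : ({w | H.Adj v w} \ {a}).ncard ≤ (colorNbhd H c i v).ncard := by
    rw [Set.ncard_sdiff_singleton_of_mem (s := {w | H.Adj v w}) ha]
    unfold degN at h
    omega
  have hw' : w ∈ {w | H.Adj v w} \ {a} := ⟨hw, hwa⟩
  rw [← Set.eq_of_subset_of_ncard_le hsub hcard] at hw'
  exact hw'.2

/-- The neighbors that `v` gains in its own color are those in `S` of the other color: harmless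
if `v` has degree at most 2, or was unsaturated and gains only one. -/
theorem ncard_colorNbhd_swap34_le (hc : IsColoring34 H c)
    (hout : ∀ w ∈ S, H.Adj v w → c w ≠ c v →
      degN H v < 3 ∨ ¬ Saturated34 H c (c v) v ∧ ∀ u ∈ S, H.Adj v u → c u ≠ c v → u = w) :
    (colorNbhd H (swap34 S c) (c v) v).ncard ≤ c v := by
  have hcv := hc.1 v
  have hold : ∀ u ∈ colorNbhd H (swap34 S c) (c v) v, u ∉ S → u ∈ colorNbhd H c (c v) v :=
    fun u ⟨hvu, hcu⟩ huS => ⟨hvu, by rwa [swap34_of_notMem huS] at hcu⟩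
  have hgain : ∀ u ∈ colorNbhd H (swap34 S c) (c v) v, u ∈ S → c u ≠ c v := by
    rintro u ⟨-, hcu⟩ huS
    rw [swap34_of_mem huS] at hcu
    omega
  by_cases hT : ∃ w ∈ S, H.Adj v w ∧ c w ≠ c v
  · obtain ⟨w, hwS, hvw, hcw⟩ := hT
    rcases hout w hwS hvw hcw with hsmall | ⟨hns, huniq⟩
    · have := ncard_colorNbhd_le_degN H (swap34 S c) (c v) v
      omega
    · have hins : colorNbhd H (swap34 S c) (c v) v ⊆ insert w (colorNbhd H c (c v) v) := by
        intro u hu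
        by_cases huS : u ∈ S
        · exact Or.inl (huniq u huS hu.1 (hgain u hu huS))
        · exact Or.inr (hold u hu huS)
      calc _ ≤ _ := Set.ncard_le_ncard hins
        _ ≤ _ := Set.ncard_insert_le _ _
        _ ≤ c v := hc.ncard_colorNbhd_lt rfl hns
  · push Not at hT
    refine (Set.ncard_le_ncard fun u hu => hold u hu fun huS => ?_).trans (hc.2 v)
    exact hgain u hu huS (hT u huS hu.1)

theorem isColoring34_swap34 (hc : IsColoring34 H c)
    (halt : ∀ v ∈ S, ∀ w ∈ S, H.Adj v w → c w ≠ c v)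
    (hin : ∀ v ∈ S, (colorNbhd H c (7 - c v) v \ S).ncard ≤ 7 - c v)
    (hout : ∀ v ∉ S, ∀ w ∈ S, H.Adj v w → c w ≠ c v →
      degN H v < 3 ∨ ¬ Saturated34 H c (c v) v ∧ ∀ u ∈ S, H.Adj v u → c u ≠ c v → u = w) :
    IsColoring34 H (swap34 S c) := by
  refine ⟨fun v => ?_, fun v => ?_⟩
  · have := hc.1 v
    by_cases hv : v ∈ S
    · rw [swap34_of_mem hv]
      omega
    · rwa [swap34_of_notMem hv]
  change (colorNbhd H (swap34 S c) (swap34 S c v) v).ncard ≤ swap34 S c v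
  by_cases hv : v ∈ S
  · rw [swap34_of_mem hv]
    exact (Set.ncard_le_ncard (colorNbhd_swap34_subset hc (halt v hv))).trans (hin v hv)
  · rw [swap34_of_notMem hv]
    exact ncard_colorNbhd_swap34_le hc (hout v hv)

theorem not_saturated34_swap34 (hs : Saturated34 H c i v) (hS : ∀ w ∈ S, H.Adj v w → c w = i)
    (ha : a ∈ S) (hva : H.Adj v a) : ¬ Saturated34 H (swap34 S c) i v := by
  rintro ⟨-, hs'⟩
  have hsub : colorNbhd H (swap34 S c) i v ⊆ colorNbhd H c i v \ {a} := by
    rintro w ⟨hvw, hcw⟩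
    by_cases hwS : w ∈ S
    · rw [swap34_of_mem hwS, hS w hwS hvw] at hcw
      omega
    · exact ⟨⟨hvw, by rwa [swap34_of_notMem hwS] at hcw⟩, fun (h : w = a) => hwS (h ▸ ha)⟩
  have h1 : (colorNbhd H (swap34 S c) i v).ncard = i := hs'
  have h2 : (colorNbhd H c i v).ncard = i := hs.2
  have hav : a ∈ colorNbhd H c i v := ⟨hva, hS a ha hva⟩
  have h3 := Set.ncard_le_ncard hsub
  rw [Set.ncard_sdiff_singleton_of_mem hav] at h3
  have := (Set.ncard_pos (Set.toFinite _)).2 ⟨a, hav⟩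
  omega

end Coloring

/-- What `G - u` inherits when `G` is not colorable and `u` is a 2-vertex with neighbors `a`
and `b`. -/
def PairAlwaysSaturated (H : SimpleGraph V) (a b : V) : Prop :=
  ∀ c, IsColoring34 H c → ∀ i, i = 3 ∨ i = 4 → Saturated34 H c i a ∨ Saturated34 H c i b

/-- In `G - u₁`, a 5p-, 5s- or 6p-vertex `x` adjacent to `u₁` with a 3⁺-neighbor `a`. -/
def IsPoorEnd (H : SimpleGraph V) (x a : V) : Prop :=
  degN H x = 4 ∨ degN H x = 5 ∧ bigNbrs H x ⊆ {a}

/-- In `G - u₁`, a 5p-, 5s- or 6p-vertex `x` not adjacent to `u₁` with 3⁺-neighbors `a`, `b`. -/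
def IsPoorInner (H : SimpleGraph V) (x a b : V) : Prop :=
  degN H x = 5 ∧ bigNbrs H x ⊆ {a, b}

section Saturation

variable {H : SimpleGraph V} {c : V → ℕ} {i : ℕ} {x a b n w : V}

namespace PairAlwaysSaturated

theorem symm (hS : PairAlwaysSaturated H a b) : PairAlwaysSaturated H b a :=
  fun c hc i hi => (hS c hc i hi).symm

theorem color_ne (hS : PairAlwaysSaturated H a b) (hc : IsColoring34 H c) : c a ≠ c b := by
  intro h
  have := hc.1 a
  rcases hS c hc (7 - c a) (by omega) with h' | h' <;>
  · have := h'.1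
    omega

theorem saturated_left (hS : PairAlwaysSaturated H a b) (hc : IsColoring34 H c) :
    Saturated34 H c (c a) a :=
  (hS c hc (c a) (hc.1 a)).resolve_right fun h => hS.color_ne hc h.1.symm

theorem saturated_right (hS : PairAlwaysSaturated H a b) (hc : IsColoring34 H c) :
    Saturated34 H c (c b) b :=
  hS.symm.saturated_left hc

end PairAlwaysSaturated

variable [Finite V]

/-- In degree 4, saturation leaves no neighbor but `a` outside the color `i`. -/
theorem IsPoorEnd.eq_of_adj (hP : IsPoorEnd H x a) (ha : H.Adj x a) (hs : Saturated34 H c i x)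
    (hi : 3 ≤ i) (h : i = 4 ∨ c a ≠ i) (hw : H.Adj x w) (hcw : c w ≠ i) (hbig : 3 ≤ degN H w) :
    w = a := by
  rcases hP with hd | ⟨-, hb⟩
  · have hcount : (colorNbhd H c i x).ncard = i := hs.2
    by_contra hwa
    rcases h with rfl | hca
    · exact hcw (color_eq_of_degN_le (by omega) hw)
    · exact hcw (color_eq_of_degN_le_add_one (by omega) ha hca hw hwa)
  · exact hb ⟨hw, hbig⟩

theorem IsPoorInner.isColoring34_swap34_singleton (hP : IsPoorInner H x a b) (ha : H.Adj x a)
    (hb : H.Adj x b) (hab : a ≠ b) (hc : IsColoring34 H c) (hca : c a = c x) (hcb : c b = c x) :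
    IsColoring34 H (swap34 {x} c) := by
  have hcx := hc.1 x
  refine isColoring34_swap34 hc (by simp) (fun v hv => ?_) (fun v _ w hw hvw hcw => ?_)
  · obtain rfl : v = x := hv
    have := ncard_colorNbhd_sdiff_add_two_le (c := c) (S := {v}) (i := 7 - c v) ha hb hab
      (Or.inr (by omega)) (Or.inr (by omega))
    have := hP.1
    omega
  · obtain rfl : w = x := hw
    left
    by_contra hbig
    rcases hP.2 ⟨hvw.symm, by omega⟩ with rfl | rfl
    · exact hcw hca.symm
    · exact hcw hcb.symm

namespace PairAlwaysSaturated

/-- Otherwise exchanging the color of `a` gives `a` and `b` the same color. -/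
theorem saturated_of_isPoorEnd (hS : PairAlwaysSaturated H a b) (hP : IsPoorEnd H a n)
    (hn : H.Adj a n) (hc : IsColoring34 H c) (h : c a = 4 ∨ c n ≠ c a) :
    Saturated34 H c (7 - c a) n := by
  by_contra hns
  have hca := hc.1 a
  have hsat := hS.saturated_left hc
  have hdeg : degN H a ≤ 5 := by rcases hP with h4 | ⟨h5, -⟩ <;> omega
  have hsw : IsColoring34 H (swap34 {a} c) := by
    refine isColoring34_swap34 hc (by simp) (fun v hv => ?_) (fun v hv w hw hvw hcw => ?_)
    · obtain rfl : v = a := hv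
      exact hsat.ncard_colorNbhd_sdiff_le hc hdeg
    obtain rfl : w = a := hw
    by_cases hvn : v = n
    · subst hvn
      exact Or.inr ⟨by rwa [show c v = 7 - c w by have := hc.1 v; omega], fun u hu _ _ => hu⟩
    · left
      by_contra hbig
      exact hvn (hP.eq_of_adj hn hsat (by omega) h hvw.symm (Ne.symm hcw) (by omega))
  refine hS.color_ne hsw ?_
  have hb : b ∉ ({a} : Set V) := fun h => hS.color_ne hc (by rw [Set.mem_singleton_iff.1 h])
  rw [swap34_of_mem (Set.mem_singleton a), swap34_of_notMem hb]
  have := hc.1 b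
  have := hS.color_ne hc
  omega

end PairAlwaysSaturated

end Saturation

/-- The configuration that `H = G - u₁` inherits from the 5-cycle `u₁u₂u₃u₄u₅`. -/
structure PathConfig (H : SimpleGraph V) (u₂ u₃ u₄ u₅ : V) : Prop where
  adj₂₃ : H.Adj u₂ u₃
  adj₃₄ : H.Adj u₃ u₄
  adj₄₅ : H.Adj u₄ u₅
  ne₂₄ : u₂ ≠ u₄
  ne₃₅ : u₃ ≠ u₅
  not_adj₂₄ : ¬ H.Adj u₂ u₄
  not_adj₃₅ : ¬ H.Adj u₃ u₅
  saturated : PairAlwaysSaturated H u₂ u₅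
  poorEnd : IsPoorEnd H u₂ u₃
  poorInner : IsPoorInner H u₃ u₂ u₄

namespace PathConfig

variable {H : SimpleGraph V} {c : V → ℕ} {u₂ u₃ u₄ u₅ : V}

theorem color_ne_of_adj (hK : PathConfig H u₂ u₃ u₄ u₅) (h₂ : c u₂ = 4) (h₃ : c u₃ = 3)
    (h₄ : c u₄ = 4) (h₅ : c u₅ = 3) :
    ∀ v ∈ ({u₂, u₃, u₄, u₅} : Set V), ∀ w ∈ ({u₂, u₃, u₄, u₅} : Set V), H.Adj v w → c w ≠ c v := by
  rintro v (rfl | rfl | rfl | rfl) w (rfl | rfl | rfl | rfl) hvw <;>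
    first
      | exact absurd hvw (H.loopless.irrefl _)
      | omega
      | exact absurd hvw hK.not_adj₂₄
      | exact absurd hvw.symm hK.not_adj₂₄
      | exact absurd hvw hK.not_adj₃₅
      | exact absurd hvw.symm hK.not_adj₃₅

variable [Finite V]

/-- Otherwise exchanging the color of `u₃` unsaturates `u₂`. -/
theorem color_ne_of_color_eq (hK : PathConfig H u₂ u₃ u₄ u₅) (hc : IsColoring34 H c)
    (h₃ : c u₃ = c u₂) : c u₄ ≠ c u₂ := by
  intro h₄
  have hsw := hK.poorInner.isColoring34_swap34_singleton hK.adj₂₃.symm hK.adj₃₄ hK.ne₂₄ hc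
    h₃.symm (h₄.trans h₃.symm)
  have hu₂ : u₂ ∉ ({u₃} : Set V) := hK.adj₂₃.ne
  refine not_saturated34_swap34 (hK.saturated.saturated_left hc) (fun w hw _ => ?_)
    (Set.mem_singleton u₃) hK.adj₂₃ ?_
  · rw [Set.mem_singleton_iff.1 hw, h₃]
  · have := hK.saturated.saturated_left hsw
    rwa [swap34_of_notMem hu₂] at this

/-- Otherwise exchanging the colors of `u₂` and `u₃` gives `u₂` the color of `u₅`. -/
theorem saturated_four (hK : PathConfig H u₂ u₃ u₄ u₅) (hc : IsColoring34 H c) (h₂ : c u₂ = 4)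
    (h₃ : Saturated34 H c 3 u₃) : Saturated34 H c 4 u₄ := by
  by_contra h₄
  have hs₂ : Saturated34 H c 4 u₂ := h₂ ▸ hK.saturated.saturated_left hc
  have hc₃ := h₃.1
  have hc₅ : c u₅ = 3 := by have := hK.saturated.color_ne hc; have := hc.1 u₅; omega
  have hd₂ : degN H u₂ ≤ 5 := by rcases hK.poorEnd with h | ⟨h, -⟩ <;> omega
  have hsw : IsColoring34 H (swap34 {u₂, u₃} c) := by
    refine isColoring34_swap34 hc ?_ ?_ ?_
    · rintro v (rfl | rfl) w (rfl | rfl) hvw <;>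
        first | exact absurd hvw (H.loopless.irrefl _) | omega
    · rintro v (rfl | rfl)
      · exact (hK.saturated.saturated_left hc).ncard_colorNbhd_sdiff_le hc hd₂
      · exact (hc₃ ▸ h₃).ncard_colorNbhd_sdiff_le hc hK.poorInner.1.le
    · rintro v hv w (rfl | rfl) hvw hcw <;> have := hc.1 v
      · left
        by_contra hbig
        exact hv (Or.inr (hK.poorEnd.eq_of_adj hK.adj₂₃ hs₂ (by omega) (Or.inl rfl) hvw.symm
          (by omega) (by omega)))
      · by_cases hbig : degN H v < 3
        · exact Or.inl hbig
        rcases hK.poorInner.2 ⟨hvw.symm, by omega⟩ with rfl | rfl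
        · exact absurd (Or.inl rfl) hv
        · refine Or.inr ⟨by rwa [show c v = 4 by omega], ?_⟩
          rintro u (rfl | rfl) hvu -
          · exact absurd hvu.symm hK.not_adj₂₄
          · rfl
  refine hK.saturated.color_ne hsw ?_
  have hu₅ : u₅ ∉ ({u₂, u₃} : Set V) := by
    rintro (h | h)
    · exact hK.saturated.color_ne hc (by rw [h])
    · exact hK.ne₃₅ h.symm
  rw [swap34_of_mem (Set.mem_insert _ _), swap34_of_notMem hu₅]
  omega

/-- Otherwise exchanging the colors of `u₃` and `u₄` unsaturates `u₂`. -/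
theorem color_ne_of_isPoorInner (hK : PathConfig H u₂ u₃ u₄ u₅) (h₄ : IsPoorInner H u₄ u₃ u₅)
    (hc : IsColoring34 H c) : c u₃ ≠ c u₂ := by
  intro h₃
  have hne := hK.saturated.color_ne hc
  have h₄c := hK.color_ne_of_color_eq hc h₃
  have := hc.1 u₂
  have := hc.1 u₄
  have := hc.1 u₅
  have hsw : IsColoring34 H (swap34 {u₃, u₄} c) := by
    refine isColoring34_swap34 hc ?_ ?_ ?_
    · rintro v (rfl | rfl) w (rfl | rfl) hvw <;>
        first | exact absurd hvw (H.loopless.irrefl _) | omega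
    · rintro v (rfl | rfl)
      · have := ncard_colorNbhd_sdiff_add_two_le (c := c) (S := {v, u₄}) (i := 7 - c v)
          hK.adj₂₃.symm hK.adj₃₄ hK.ne₂₄ (Or.inr (by omega)) (Or.inl (by simp))
        have := hK.poorInner.1
        omega
      · have := ncard_colorNbhd_sdiff_add_two_le (c := c) (S := {u₃, v}) (i := 7 - c v)
          hK.adj₄₅ hK.adj₃₄.symm hK.ne₃₅.symm (Or.inr (by omega)) (Or.inl (by simp))
        have := h₄.1
        omega
    · rintro v hv w (rfl | rfl) hvw hcw <;> left <;> by_contra hbig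
      · rcases hK.poorInner.2 ⟨hvw.symm, by omega⟩ with rfl | rfl
        · exact hcw h₃
        · exact hv (by simp)
      · rcases h₄.2 ⟨hvw.symm, by omega⟩ with rfl | rfl
        · exact hv (by simp)
        · exact hcw (by omega)
  have hu₂ : u₂ ∉ ({u₃, u₄} : Set V) := by simp [hK.adj₂₃.ne, hK.ne₂₄]
  refine not_saturated34_swap34 (hK.saturated.saturated_left hc) ?_ (Set.mem_insert u₃ {u₄})
    hK.adj₂₃ ?_
  · rintro w (rfl | rfl) hw
    · exact h₃
    · exact absurd hw hK.not_adj₂₄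
  · have := hK.saturated.saturated_left hsw
    rwa [swap34_of_notMem hu₂] at this

/-- If `u₂` has color 3, then `u₃` is 4-saturated, so `u₄` has color 4 and exchanging its color
unsaturates `u₅`; if `u₂` has color 4, then `u₄` would be 4-saturated with two 3-colored
neighbors among five. -/
theorem false_of_isPoorInner (hK : PathConfig H u₂ u₃ u₄ u₅) (h₄ : IsPoorInner H u₄ u₃ u₅)
    (hc : IsColoring34 H c) : False := by
  have hne := hK.saturated.color_ne hc
  have := hc.1 u₅
  have h₃ := hK.color_ne_of_isPoorInner h₄ hc
  have hs₃ := hK.saturated.saturated_of_isPoorEnd hK.poorEnd hK.adj₂₃ hc (Or.inr h₃)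
  rcases hc.1 u₂ with h₂ | h₂ <;> rw [h₂] at hs₃
  · have : (colorNbhd H c 4 u₃).ncard = 4 := hs₃.2
    have := hK.poorInner.1
    have hc₄ : c u₄ = 4 := color_eq_of_degN_le_add_one (c := c) (by omega) hK.adj₂₃.symm
      (by omega) hK.adj₃₄ hK.ne₂₄.symm
    have hsw := h₄.isColoring34_swap34_singleton hK.adj₃₄.symm hK.adj₄₅ hK.ne₃₅ hc
      (by rw [hs₃.1, hc₄]) (by omega)
    have hu₅ : u₅ ∉ ({u₄} : Set V) := hK.adj₄₅.ne.symm
    refine not_saturated34_swap34 (hK.saturated.saturated_right hc) (fun w hw _ => ?_)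
      (Set.mem_singleton u₄) hK.adj₄₅.symm ?_
    · rw [Set.mem_singleton_iff.1 hw]
      omega
    · have := hK.saturated.saturated_right hsw
      rwa [swap34_of_notMem hu₅] at this
  · have hs₄ : (colorNbhd H c 4 u₄).ncard = 4 := (hK.saturated_four hc h₂ hs₃).2
    have := ncard_colorNbhd_sdiff_add_two_le (c := c) (S := ∅) (i := 4) hK.adj₃₄.symm hK.adj₄₅
      hK.ne₃₅ (Or.inr (by rw [hs₃.1]; omega)) (Or.inr (by omega))
    rw [Set.sdiff_empty] at this
    have := h₄.1
    omega

/-- With `deg u₄ ≤ 6`, a 4-saturated `u₄` has no 3-colored neighbors besides `u₃` and `u₅`. -/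
theorem mem_pair_of_saturated_four (hK : PathConfig H u₂ u₃ u₄ u₅) (hd₄ : degN H u₄ ≤ 8)
    (hbig₄ : 7 ≤ degN H u₄ → bigNbrs H u₄ ⊆ {u₃, u₅}) (h₃ : c u₃ = 3)
    (h₄ : Saturated34 H c 4 u₄) (h₅ : c u₅ = 3) {w : V} (hw : w ∈ colorNbhd H c 3 u₄)
    (hbig : 3 ≤ degN H w) : w ∈ ({u₃, u₅} : Set V) := by
  by_cases h7 : 7 ≤ degN H u₄
  · exact hbig₄ h7 ⟨hw.1, hbig⟩
  have hpair : ({u₃, u₅} : Set V) ⊆ colorNbhd H c 3 u₄ := by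
    rintro w (rfl | rfl)
    exacts [⟨hK.adj₃₄.symm, h₃⟩, ⟨hK.adj₄₅, h₅⟩]
  have := h₄.ncard_colorNbhd_add_le (j := 3) (by omega)
  rwa [Set.eq_of_subset_of_ncard_le hpair (by rw [Set.ncard_pair hK.ne₃₅]; omega)]

theorem degN_lt_three_of_adj (hK : PathConfig H u₂ u₃ u₄ u₅) (h₅ : IsPoorEnd H u₅ u₄)
    (hd₄ : degN H u₄ ≤ 8) (hbig₄ : 7 ≤ degN H u₄ → bigNbrs H u₄ ⊆ {u₃, u₅})
    (hc : IsColoring34 H c) (h₂ : c u₂ = 4) (h₃ : c u₃ = 3) (h₄ : Saturated34 H c 4 u₄)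
    (h₅c : c u₅ = 3) {v w : V} (hv : v ∉ ({u₂, u₃, u₄, u₅} : Set V))
    (hw : w ∈ ({u₂, u₃, u₄, u₅} : Set V)) (hvw : H.Adj v w) (hcw : c w ≠ c v) :
    degN H v < 3 := by
  have := hc.1 v
  have := h₄.1
  by_contra hbig
  apply hv
  simp only [Set.mem_insert_iff, Set.mem_singleton_iff] at hw ⊢
  rcases hw with rfl | rfl | rfl | rfl
  · exact Or.inr (Or.inl (hK.poorEnd.eq_of_adj hK.adj₂₃ (h₂ ▸ hK.saturated.saturated_left hc)
      (by omega) (Or.inl rfl) hvw.symm (by omega) (by omega)))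
  · rcases hK.poorInner.2 ⟨hvw.symm, by omega⟩ with h | h
    · exact Or.inl h
    · exact Or.inr (Or.inr (Or.inl h))
  · rcases hK.mem_pair_of_saturated_four hd₄ hbig₄ h₃ h₄ h₅c ⟨hvw.symm, by omega⟩
      (by omega) with h | h
    · exact Or.inr (Or.inl h)
    · exact Or.inr (Or.inr (Or.inr h))
  · exact Or.inr (Or.inr (Or.inl (h₅.eq_of_adj hK.adj₄₅.symm
      (h₅c ▸ hK.saturated.saturated_right hc) (by omega) (Or.inr (by omega)) hvw.symm
      (by omega) (by omega))))

theorem isColoring34_swap34_path (hK : PathConfig H u₂ u₃ u₄ u₅) (h₅ : IsPoorEnd H u₅ u₄)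
    (hd₄ : degN H u₄ ≤ 8) (hbig₄ : 7 ≤ degN H u₄ → bigNbrs H u₄ ⊆ {u₃, u₅})
    (hc : IsColoring34 H c) (h₂ : c u₂ = 4) (h₃ : Saturated34 H c 3 u₃)
    (h₄ : Saturated34 H c 4 u₄) (h₅c : c u₅ = 3) :
    IsColoring34 H (swap34 {u₂, u₃, u₄, u₅} c) := by
  refine isColoring34_swap34 hc (hK.color_ne_of_adj h₂ h₃.1 h₄.1 h₅c) (fun v hv => ?_)
    fun v hv w hw hvw hcw =>
      Or.inl (hK.degN_lt_three_of_adj h₅ hd₄ hbig₄ hc h₂ h₃.1 h₄ h₅c hv hw hvw hcw)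
  simp only [Set.mem_insert_iff, Set.mem_singleton_iff] at hv
  rcases hv with rfl | rfl | rfl | rfl
  · exact (hK.saturated.saturated_left hc).ncard_colorNbhd_sdiff_le hc
      (by rcases hK.poorEnd with h | ⟨h, -⟩ <;> omega)
  · exact (h₃.1 ▸ h₃).ncard_colorNbhd_sdiff_le hc hK.poorInner.1.le
  · have hpair : ({u₃, u₅} : Set V) ⊆ colorNbhd H c 3 v := by
      rintro w (rfl | rfl)
      exacts [⟨hK.adj₃₄.symm, h₃.1⟩, ⟨hK.adj₄₅, h₅c⟩]
    have := h₄.ncard_colorNbhd_add_le (j := 3) (by omega)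
    rw [h₄.1, show 7 - 4 = 3 from rfl]
    refine (Set.ncard_le_ncard (Set.sdiff_subset_sdiff_right fun w hw => ?_)).trans
      (show (colorNbhd H c 3 v \ {u₃, u₅}).ncard ≤ 3 by
        rw [Set.ncard_sdiff hpair, Set.ncard_pair hK.ne₃₅]; omega)
    rcases hw with rfl | rfl <;> simp
  · exact (hK.saturated.saturated_right hc).ncard_colorNbhd_sdiff_le hc
      (by rcases h₅ with h | ⟨h, -⟩ <;> omega)

/-- Otherwise `u₄` is 3-saturated, so `u₃` gets color 4 and would be 4-saturated with two
3-colored neighbors among five. -/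
theorem color_eq_four_of_isPoorEnd (hK : PathConfig H u₂ u₃ u₄ u₅) (h₅ : IsPoorEnd H u₅ u₄)
    (hc : IsColoring34 H c) : c u₂ = 4 := by
  by_contra h₂
  have h₂ : c u₂ = 3 := by have := hc.1 u₂; omega
  have hne := hK.saturated.color_ne hc
  have := hc.1 u₃
  have := hc.1 u₅
  have hs₄ : Saturated34 H c 3 u₄ := by
    have := hK.saturated.symm.saturated_of_isPoorEnd h₅ hK.adj₄₅.symm hc (Or.inl (by omega))
    rwa [show c u₅ = 4 by omega] at this
  have h₃ : c u₃ ≠ c u₂ := fun h₃ => hK.color_ne_of_color_eq hc h₃ (by rw [hs₄.1, h₂])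
  have hs₃ := hK.saturated.saturated_of_isPoorEnd hK.poorEnd hK.adj₂₃ hc (Or.inr h₃)
  rw [h₂] at hs₃
  have : (colorNbhd H c 4 u₃).ncard = 4 := hs₃.2
  have := ncard_colorNbhd_sdiff_add_two_le (c := c) (S := ∅) (i := 4) hK.adj₂₃.symm hK.adj₃₄
    hK.ne₂₄ (Or.inr (by omega)) (Or.inr (by rw [hs₄.1]; omega))
  rw [Set.sdiff_empty] at this
  have := hK.poorInner.1
  omega

/-- Now `u₂, u₃, u₄, u₅` are saturated with colors 4, 3, 4, 3, and exchanging the colors along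
the whole path leaves `u₂` with at most one 3-colored neighbor. -/
theorem false_of_isPoorEnd (hK : PathConfig H u₂ u₃ u₄ u₅) (h₅ : IsPoorEnd H u₅ u₄)
    (hd₄ : degN H u₄ ≤ 8) (hbig₄ : 7 ≤ degN H u₄ → bigNbrs H u₄ ⊆ {u₃, u₅})
    (hc : IsColoring34 H c) : False := by
  have h₂ := hK.color_eq_four_of_isPoorEnd h₅ hc
  have h₅c : c u₅ = 3 := by have := hK.saturated.color_ne hc; have := hc.1 u₅; omega
  have hs₃ := hK.saturated.saturated_of_isPoorEnd hK.poorEnd hK.adj₂₃ hc (Or.inl h₂)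
  rw [h₂] at hs₃
  have hs₄ := hK.saturated_four hc h₂ hs₃
  have hsw := hK.isColoring34_swap34_path h₅ hd₄ hbig₄ hc h₂ hs₃ hs₄ h₅c
  rcases hK.saturated _ hsw 3 (Or.inl rfl) with h | h
  · have h1 := Set.ncard_le_ncard (colorNbhd_swap34_subset hc
      (hK.color_ne_of_adj h₂ hs₃.1 hs₄.1 h₅c u₂ (by simp)))
    rw [h₂, show 7 - 4 = 3 from rfl] at h1
    have : (colorNbhd H (swap34 {u₂, u₃, u₄, u₅} c) 3 u₂).ncard = 3 := h.2
    have := (h₂ ▸ hK.saturated.saturated_left hc).ncard_colorNbhd_add_le (j := 3) (by omega)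
    have := Set.ncard_le_ncard (Set.sdiff_subset (s := colorNbhd H c 3 u₂)
      (t := {u₂, u₃, u₄, u₅}))
    have : degN H u₂ ≤ 5 := by rcases hK.poorEnd with h | ⟨h, -⟩ <;> omega
    omega
  · have := h.1
    rw [swap34_of_mem (by simp)] at this
    omega

end PathConfig

def IsPoor (G : SimpleGraph V) (x : V) : Prop :=
  Is5p G x ∨ Is5s G x ∨ Is6p G x

section DeleteVert

variable {G : SimpleGraph V} {c : V → ℕ} {i : ℕ} {u x a b w : V}

theorem degN_deleteVert_of_not_adj (hx : x ≠ u) (h : ¬ G.Adj x u) :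
    degN (deleteVert G u) x = degN G x := by
  unfold degN
  congr 1
  ext w
  exact ⟨fun h' => h'.1, fun h' => ⟨h', hx, by rintro rfl; exact h h'⟩⟩

variable [Finite V]

theorem degN_deleteVert_le (G : SimpleGraph V) (u x : V) : degN (deleteVert G u) x ≤ degN G x :=
  Set.ncard_le_ncard fun _ h => h.1

theorem degN_deleteVert_add_one (h : G.Adj x u) : degN (deleteVert G u) x + 1 = degN G x := by
  have : {w | (deleteVert G u).Adj x w} = {w | G.Adj x w} \ {u} := by
    ext w
    exact ⟨fun h' => ⟨h'.1, h'.2.2⟩, fun h' => ⟨h'.1, G.ne_of_adj h, h'.2⟩⟩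
  unfold degN
  rw [this, Set.ncard_sdiff_singleton_add_one (s := {w | G.Adj x w}) h]

theorem bigNbrs_deleteVert_subset : bigNbrs (deleteVert G u) x ⊆ bigNbrs G x :=
  fun w hw => ⟨hw.1.1, hw.2.trans (degN_deleteVert_le G u w)⟩

theorem bigNbrs_eq_pair (ht : tpn G x ≤ 2) (ha : a ∈ bigNbrs G x) (hb : b ∈ bigNbrs G x)
    (hab : a ≠ b) : bigNbrs G x = {a, b} :=
  (Set.eq_of_subset_of_ncard_le (Set.insert_subset ha (Set.singleton_subset_iff.2 hb))
    (by rw [Set.ncard_pair hab]; exact ht)).symm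

theorem IsPoor.isPoorEnd_deleteVert (hx : IsPoor G x) (hu : G.Adj x u) (ha : a ∈ bigNbrs G x) :
    IsPoorEnd (deleteVert G u) x a := by
  have hdeg := degN_deleteVert_add_one hu
  rcases hx with ⟨hd, -⟩ | ⟨hd, -⟩ | ⟨hd, ht⟩
  · exact Or.inl (by omega)
  · exact Or.inl (by omega)
  · have : bigNbrs G x = {a} :=
      (Set.eq_of_subset_of_ncard_le (Set.singleton_subset_iff.2 ha)
        (by rw [Set.ncard_singleton]; exact ht.le)).symm
    exact Or.inr ⟨by omega, this ▸ bigNbrs_deleteVert_subset⟩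

theorem IsPoor.isPoorInner_deleteVert (hx : IsPoor G x) (hxu : x ≠ u) (hu : ¬ G.Adj x u)
    (ha : a ∈ bigNbrs G x) (hb : b ∈ bigNbrs G x) (hab : a ≠ b) :
    IsPoorInner (deleteVert G u) x a b := by
  have h2 : 2 ≤ tpn G x := by
    have := Set.ncard_le_ncard (Set.insert_subset ha (Set.singleton_subset_iff.2 hb))
    rwa [Set.ncard_pair hab] at this
  rcases hx with ⟨-, ht⟩ | ⟨hd, ht⟩ | ⟨-, ht⟩
  · omega
  · exact ⟨(degN_deleteVert_of_not_adj hxu hu).trans hd,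
      bigNbrs_eq_pair ht.le ha hb hab ▸ bigNbrs_deleteVert_subset⟩
  · omega

/-- Coloring `u` with `i` extends the coloring of `G - u`, since `u` has at most 3 neighbors,
unless some neighbor of `u` is already `i`-saturated. -/
theorem exists_saturated34_of_not_colorable34 (hG : ¬ Colorable34 G) (hu : degN G u ≤ 3)
    (hc : IsColoring34 (deleteVert G u) c) (hi : i = 3 ∨ i = 4) :
    ∃ w, G.Adj u w ∧ Saturated34 (deleteVert G u) c i w := by
  classical
  by_contra! hns
  refine hG ⟨Function.update c u i, fun v => ?_, fun v => ?_⟩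
  · rcases eq_or_ne v u with rfl | hv
    · simpa using hi
    · simpa [hv] using hc.1 v
  change (colorNbhd G (Function.update c u i) (Function.update c u i v) v).ncard ≤ _
  rcases eq_or_ne v u with rfl | hv
  · simp only [Function.update_self]
    have := ncard_colorNbhd_le_degN G (Function.update c v i) i v
    omega
  rw [Function.update_of_ne hv]
  have hsub : colorNbhd G (Function.update c u i) (c v) v ⊆
      insert u (colorNbhd (deleteVert G u) c (c v) v) := by
    rintro w ⟨hvw, hcw⟩
    rcases eq_or_ne w u with rfl | hw
    · exact Or.inl rfl
    · exact Or.inr ⟨⟨hvw, hv, hw⟩, by rwa [Function.update_of_ne hw] at hcw⟩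
  by_cases hgain : G.Adj v u ∧ c v = i
  · calc _ ≤ _ := Set.ncard_le_ncard hsub
      _ ≤ _ := Set.ncard_insert_le _ _
      _ ≤ c v := hc.ncard_colorNbhd_lt rfl (by rw [hgain.2]; exact hns v hgain.1.symm)
  · refine (Set.ncard_le_ncard fun w hw => (hsub hw).resolve_left ?_).trans (hc.2 v)
    rintro rfl
    exact hgain ⟨hw.1, by simpa using hw.2.symm⟩

theorem eq_or_eq_of_degN_eq_two (hu : degN G u = 2) (ha : G.Adj u a) (hb : G.Adj u b)
    (hab : a ≠ b) (hw : G.Adj u w) : w = a ∨ w = b := by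
  have heq : ({a, b} : Set V) = {w | G.Adj u w} :=
    Set.eq_of_subset_of_ncard_le (by rintro _ (rfl | rfl) <;> assumption)
      (by rw [Set.ncard_pair hab]; exact hu.le)
  have hw' : w ∈ {w | G.Adj u w} := hw
  rwa [← heq] at hw'

theorem pairAlwaysSaturated_deleteVert (hG : ¬ Colorable34 G) (hu : degN G u = 2)
    (ha : G.Adj u a) (hb : G.Adj u b) (hab : a ≠ b) :
    PairAlwaysSaturated (deleteVert G u) a b := by
  intro c hc i hi
  obtain ⟨w, huw, hw⟩ := exists_saturated34_of_not_colorable34 hG (by omega) hc hi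
  rcases eq_or_eq_of_degN_eq_two hu ha hb hab huw with rfl | rfl
  exacts [Or.inl hw, Or.inr hw]

end DeleteVert

theorem three_of_two_lt_ncard {α : Type*} {P : α → Prop} {a b c d : α}
    (h : 2 < {x ∈ ({a, b, c, d} : Set α) | P x}.ncard) :
    P a ∧ P b ∧ P c ∨ P a ∧ P b ∧ P d ∨ P b ∧ P c ∧ P d ∨ P a ∧ P c ∧ P d := by
  classical
  have hset : {x ∈ ({a, b, c, d} : Set α) | P x} = ↑(({a, b, c, d} : Finset α).filter P) := by
    ext; simp
  rw [hset, Set.ncard_coe_finset] at h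
  by_cases ha : P a <;> by_cases hb : P b <;> by_cases hc : P c <;> by_cases hd : P d <;>
    simp only [Finset.filter_insert, Finset.filter_singleton, ha, hb, hc, hd, if_true,
      if_false] at h <;>
    first
      | tauto
      | exact absurd h (not_lt.2 Finset.card_le_two)

structure Cycle5Config (G : SimpleGraph V) (u₁ u₂ u₃ u₄ u₅ : V) : Prop where
  adj₁₂ : G.Adj u₁ u₂
  adj₂₃ : G.Adj u₂ u₃
  adj₃₄ : G.Adj u₃ u₄
  adj₄₅ : G.Adj u₄ u₅
  adj₅₁ : G.Adj u₅ u₁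
  ne₁₃ : u₁ ≠ u₃
  ne₁₄ : u₁ ≠ u₄
  ne₂₄ : u₂ ≠ u₄
  ne₂₅ : u₂ ≠ u₅
  ne₃₅ : u₃ ≠ u₅
  deg₁ : degN G u₁ = 2
  deg₂ : 3 ≤ degN G u₂
  deg₃ : 3 ≤ degN G u₃
  deg₄ : 3 ≤ degN G u₄
  deg₅ : 3 ≤ degN G u₅

namespace Cycle5Config

variable {G : SimpleGraph V} {u₁ u₂ u₃ u₄ u₅ w : V}

theorem reverse (hC : Cycle5Config G u₁ u₂ u₃ u₄ u₅) : Cycle5Config G u₁ u₅ u₄ u₃ u₂ where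
  adj₁₂ := hC.adj₅₁.symm
  adj₂₃ := hC.adj₄₅.symm
  adj₃₄ := hC.adj₃₄.symm
  adj₄₅ := hC.adj₂₃.symm
  adj₅₁ := hC.adj₁₂.symm
  ne₁₃ := hC.ne₁₄
  ne₁₄ := hC.ne₁₃
  ne₂₄ := hC.ne₃₅.symm
  ne₂₅ := hC.ne₂₅.symm
  ne₃₅ := hC.ne₂₄.symm
  deg₁ := hC.deg₁
  deg₂ := hC.deg₅
  deg₃ := hC.deg₄
  deg₄ := hC.deg₃
  deg₅ := hC.deg₂

variable [Finite V]

theorem not_adj_one (hC : Cycle5Config G u₁ u₂ u₃ u₄ u₅) (h₂ : w ≠ u₂) (h₅ : w ≠ u₅) :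
    ¬ G.Adj w u₁ := fun h =>
  (eq_or_eq_of_degN_eq_two hC.deg₁ hC.adj₁₂ hC.adj₅₁.symm hC.ne₂₅ h.symm).elim h₂ h₅

theorem pathConfig (hC : Cycle5Config G u₁ u₂ u₃ u₄ u₅) (hG : ¬ Colorable34 G)
    (htri : ∀ a b c : V, G.Adj a b → G.Adj b c → ¬ G.Adj c a) (h₂ : IsPoor G u₂)
    (h₃ : IsPoor G u₃) : PathConfig (deleteVert G u₁) u₂ u₃ u₄ u₅ where
  adj₂₃ := ⟨hC.adj₂₃, hC.adj₁₂.ne.symm, hC.ne₁₃.symm⟩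
  adj₃₄ := ⟨hC.adj₃₄, hC.ne₁₃.symm, hC.ne₁₄.symm⟩
  adj₄₅ := ⟨hC.adj₄₅, hC.ne₁₄.symm, hC.adj₅₁.ne⟩
  ne₂₄ := hC.ne₂₄
  ne₃₅ := hC.ne₃₅
  not_adj₂₄ h := htri _ _ _ hC.adj₂₃ hC.adj₃₄ h.1.symm
  not_adj₃₅ h := htri _ _ _ hC.adj₃₄ hC.adj₄₅ h.1.symm
  saturated := pairAlwaysSaturated_deleteVert hG hC.deg₁ hC.adj₁₂ hC.adj₅₁.symm hC.ne₂₅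
  poorEnd := h₂.isPoorEnd_deleteVert hC.adj₁₂.symm ⟨hC.adj₂₃, hC.deg₃⟩
  poorInner := h₃.isPoorInner_deleteVert hC.ne₁₃.symm (hC.not_adj_one hC.adj₂₃.ne.symm hC.ne₃₅)
    ⟨hC.adj₂₃.symm, hC.deg₂⟩ ⟨hC.adj₃₄, hC.deg₄⟩ hC.ne₂₄

theorem false_of_isPoor (hC : Cycle5Config G u₁ u₂ u₃ u₄ u₅) (hG : MinNonColorable34 G)
    (htri : ∀ a b c : V, G.Adj a b → G.Adj b c → ¬ G.Adj c a) (h₂ : IsPoor G u₂)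
    (h₃ : IsPoor G u₃)
    (h : IsPoor G u₄ ∨ IsPoor G u₅ ∧ degN G u₄ ≤ 8 ∧ (7 ≤ degN G u₄ → tpn G u₄ ≤ 2)) :
    False := by
  obtain ⟨c, hc⟩ := hG.2.1 u₁
  have hK := hC.pathConfig hG.1 htri h₂ h₃
  have hn₄ : ¬ G.Adj u₄ u₁ := hC.not_adj_one hC.ne₂₄.symm hC.adj₄₅.ne
  have hb₃ : u₃ ∈ bigNbrs G u₄ := ⟨hC.adj₃₄.symm, hC.deg₃⟩
  have hb₅ : u₅ ∈ bigNbrs G u₄ := ⟨hC.adj₄₅, hC.deg₅⟩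
  rcases h with h₄ | ⟨h₅, hd, ht⟩
  · exact hK.false_of_isPoorInner (h₄.isPoorInner_deleteVert hC.ne₁₄.symm hn₄ hb₃ hb₅ hC.ne₃₅) hc
  have hdeg := degN_deleteVert_of_not_adj hC.ne₁₄.symm hn₄
  refine hK.false_of_isPoorEnd (h₅.isPoorEnd_deleteVert hC.adj₅₁ ⟨hC.adj₄₅.symm, hC.deg₄⟩)
    (hdeg ▸ hd) (fun h7 => ?_) hc
  rw [← bigNbrs_eq_pair (ht (hdeg ▸ h7)) hb₃ hb₅ hC.ne₃₅]
  exact bigNbrs_deleteVert_subset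

end Cycle5Config

end Development

/-- In a minimally non-(3,4)-colorable graph of girth at least 5, if
`u₁u₂u₃u₄u₅` is a 5-cycle with `u₁` of degree 2 and `u₂, u₃, u₄, u₅` of degree at
least 3, then either at most two of `u₂, u₃, u₄, u₅` are 5p-, 5s-, or 6p-vertices,
or some vertex of the cycle is a `7⁺`-vertex with at least three 3^+-neighbors or
a `9⁺`-vertex. -/
theorem stmt_18 {V : Type*} [Fintype V] (G : SimpleGraph V)
    (hG : MinNonColorable34 G) (hgirth : GirthAtLeast5 G)
    (u1 u2 u3 u4 u5 : V)
    (hnd : ([u1, u2, u3, u4, u5] : List V).Nodup)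
    (a12 : G.Adj u1 u2) (a23 : G.Adj u2 u3) (a34 : G.Adj u3 u4)
    (a45 : G.Adj u4 u5) (a51 : G.Adj u5 u1)
    (d1 : degN G u1 = 2)
    (d2 : 3 ≤ degN G u2) (d3 : 3 ≤ degN G u3) (d4 : 3 ≤ degN G u4)
    (d5 : 3 ≤ degN G u5) :
    {x ∈ ({u2, u3, u4, u5} : Set V) | Is5p G x ∨ Is5s G x ∨ Is6p G x}.ncard ≤ 2 ∨
      ∃ x ∈ ({u1, u2, u3, u4, u5} : Set V),
        (7 ≤ degN G x ∧ 3 ≤ tpn G x) ∨ 9 ≤ degN G x := by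
  by_contra! h
  obtain ⟨hcard, hbound⟩ := h
  simp only [List.nodup_cons, List.mem_cons, List.not_mem_nil, or_false, not_or,
    List.nodup_nil, and_true] at hnd
  obtain ⟨⟨-, n13, n14, -⟩, ⟨-, n24, n25⟩, ⟨-, n35⟩, -⟩ := hnd
  have hC : Cycle5Config G u1 u2 u3 u4 u5 :=
    ⟨a12, a23, a34, a45, a51, n13, n14, n24, n25, n35, d1, d2, d3, d4, d5⟩
  have hbd : ∀ x ∈ ({u1, u2, u3, u4, u5} : Set V), degN G x ≤ 8 ∧ (7 ≤ degN G x → tpn G x ≤ 2) :=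
    fun x hx => by have := hbound x hx; omega
  rcases three_of_two_lt_ncard hcard with ⟨h2, h3, h4⟩ | ⟨h2, h3, h5⟩ | ⟨h3, h4, h5⟩ | ⟨h2, h4, h5⟩
  · exact hC.false_of_isPoor hG hgirth.1 h2 h3 (Or.inl h4)
  · exact hC.false_of_isPoor hG hgirth.1 h2 h3 (Or.inr ⟨h5, hbd u4 (by simp)⟩)
  · exact hC.reverse.false_of_isPoor hG hgirth.1 h5 h4 (Or.inl h3)
  · exact hC.reverse.false_of_isPoor hG hgirth.1 h5 h4 (Or.inr ⟨h2, hbd u3 (by simp)⟩)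
end
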